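/- arXiv:1707.07260 — 2 statements merged into one kernel-verified Lean document; each statement's English description precedes it below -/
import Mathlib

section
/- For every (D,μ) ∈ O_M and every integer k, the boundary value problem −(D(y)u′(y))′ + (μ(y) + λ_k² D(y))u(y) = 0 on (0,H), u(0) = 0, u(H) = 1 has a unique solution u_k ∈ C²([0,H]); moreover there exists a constant b > 0, depending only on (μ_0, D_0, M, L, H, k), such that ‖u_k‖_{C²([0,H])} ≤ b for every (D,μ) ∈ O_M. -/
/-- sup-norm (C⁰ norm) on [0,H] -/
noncomputable def cNorm0 (H : ℝ) (f : ℝ → ℝ) : ℝ :=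
  sSup ((fun y => |f y|) '' Set.Icc 0 H)

/-- C¹ norm on [0,H] -/
noncomputable def cNorm1 (H : ℝ) (f : ℝ → ℝ) : ℝ :=
  cNorm0 H f + cNorm0 H (deriv f)

/-- C² norm on [0,H] -/
noncomputable def cNorm2 (H : ℝ) (f : ℝ → ℝ) : ℝ :=
  cNorm1 H f + cNorm0 H (deriv (deriv f))

/-- membership of the pair (D, μ) in the admissible set O_M -/
def InOM (H D0 mu0 M : ℝ) (D mu : ℝ → ℝ) : Prop :=
  ContDiff ℝ 3 D ∧ ContDiff ℝ 3 mu ∧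
  (∀ y ∈ Set.Icc (0 : ℝ) H, D0 < D y) ∧
  (∀ y ∈ Set.Icc (0 : ℝ) H, mu0 < mu y) ∧
  (∀ i ≤ 3, ∀ y ∈ Set.Icc (0 : ℝ) H, |iteratedDeriv i D y| ≤ M) ∧
  (∀ i ≤ 3, ∀ y ∈ Set.Icc (0 : ℝ) H, |iteratedDeriv i mu y| ≤ M)

/-- λ_k = 2kπ/L -/
noncomputable def lamk (L : ℝ) (k : ℤ) : ℝ := 2 * (k : ℝ) * Real.pi / L

/-- u is a solution of −(D u′)′ + (μ + λ_k² D) u = 0 on (0,H), u(0)=0, u(H)=1 -/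
noncomputable def IsSol (H L : ℝ) (k : ℤ) (D mu u : ℝ → ℝ) : Prop :=
  ContDiff ℝ 2 u ∧ u 0 = 0 ∧ u H = 1 ∧
  ∀ y ∈ Set.Ioo (0 : ℝ) H,
    -(deriv (fun z => D z * deriv u z) y)
      + (mu y + (lamk L k) ^ 2 * D y) * u y = 0

/-- κ_m = min_{[0,H]} ( (√D)″/√D + μ/D + λ_k² ) -/
noncomputable def kapm (H L : ℝ) (k : ℤ) (D mu : ℝ → ℝ) : ℝ :=
  sInf ((fun y => deriv (deriv (fun z => Real.sqrt (D z))) y / Real.sqrt (D y)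
    + mu y / D y + (lamk L k) ^ 2) '' Set.Icc 0 H)

/-- κ_M = max_{[0,H]} ( (√D)″/√D + μ/D + λ_k² ) -/
noncomputable def kapM (H L : ℝ) (k : ℤ) (D mu : ℝ → ℝ) : ℝ :=
  sSup ((fun y => deriv (deriv (fun z => Real.sqrt (D z))) y / Real.sqrt (D y)
    + mu y / D y + (lamk L k) ^ 2) '' Set.Icc 0 H)

/-- the lower comparison function u̲_m -/
noncomputable def uLow (H L : ℝ) (k : ℤ) (D mu : ℝ → ℝ) (y : ℝ) : ℝ :=
  Real.sqrt (D H) / Real.sqrt (D y)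
    * (Real.sinh (Real.sqrt (kapm H L k D mu) * y)
        / Real.sinh (Real.sqrt (kapm H L k D mu) * H))

/-- the upper comparison function ū_M -/
noncomputable def uHigh (H L : ℝ) (k : ℤ) (D mu : ℝ → ℝ) (y : ℝ) : ℝ :=
  Real.sqrt (D H) / Real.sqrt (D y)
    * (Real.sinh (Real.sqrt (kapM H L k D mu) * y)
        / Real.sinh (Real.sqrt (kapM H L k D mu) * H))

/-!
Uniqueness and the bound `|u| ≤ 1` come from the weak maximum principle for `-(D u')' + c u`
with `c = μ + λ_k² D > 0`: at an interior positive maximum of `u` the flux `D u'` vanishes and,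
being increasing there, makes `u` increase past the maximum. For existence one solves the initial
value problem `ψ(0) = 0`, `ψ'(0) = 1`, a linear ODE with bounded coefficients and hence globally
solvable by Picard–Lindelöf steps of uniform length; the maximum principle forces `ψ(H) ≠ 0`, and
`ψ / ψ(H)` solves the boundary value problem. For the `C²` bound, the mean value theorem gives a
point where `u' = 1/H`, the equation bounds `(D u')' = c u`, hence `D u'` and `u'`, and finally
`u''` through `D u'' = c u - D' u'`.
-/

open Set Topology
open scoped NNReal

section ODE

variable {E : Type*} [NormedAddCommGroup E] [NormedSpace ℝ E] {f : ℝ → E → E}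

theorem exists_hasDerivWithinAt_Icc_glue {a b c : ℝ} (hab : a ≤ b) (hbc : b ≤ c)
    {x y : ℝ → E} (hxy : x b = y b)
    (hx : ∀ t ∈ Icc a b, HasDerivWithinAt x (f t (x t)) (Icc a b) t)
    (hy : ∀ t ∈ Icc b c, HasDerivWithinAt y (f t (y t)) (Icc b c) t) :
    ∃ z : ℝ → E, EqOn z x (Icc a b) ∧ EqOn z y (Icc b c) ∧
      ∀ t ∈ Icc a c, HasDerivWithinAt z (f t (z t)) (Icc a c) t := by
  classical
  set z : ℝ → E := fun t => if t ≤ b then x t else y t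
  have hzx : EqOn z x (Icc a b) := fun t ht => if_pos ht.2
  have hzy : EqOn z y (Icc b c) := fun t ht => by
    rcases ht.1.eq_or_lt with rfl | hlt
    · exact (if_pos le_rfl).trans hxy
    · exact if_neg hlt.not_ge
  have piece : ∀ {s : Set ℝ} {w : ℝ → E}, IsClosed s → EqOn z w s →
      (∀ t ∈ s, HasDerivWithinAt w (f t (w t)) s t) →
      ∀ t, HasDerivWithinAt z (f t (z t)) s t := fun {s w} hs hzw hw t => by
    by_cases ht : t ∈ s
    · rw [hzw ht]; exact (hw t ht).congr_of_mem hzw ht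
    · exact HasFDerivWithinAt.of_notMem_closure (hs.closure_eq.symm ▸ ht)
  refine ⟨z, hzx, hzy, fun t _ => ?_⟩
  rw [← Icc_union_Icc_eq_Icc hab hbc]
  exact (piece isClosed_Icc hzx hx t).union (piece isClosed_Icc hzy hy t)

variable [CompleteSpace E] {K : ℝ≥0}

theorem exists_hasDerivWithinAt_Icc_of_lipschitzWith (hlip : ∀ t, LipschitzWith K (f t))
    (hcont : ∀ x, Continuous (f · x)) (hf0 : ∀ t, f t 0 = 0) {s s' t₀ : ℝ}
    (ht₀ : t₀ ∈ Icc s s') (hlen : (2 * K + 1) * (s' - s) ≤ 1) (x₀ : E) :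
    ∃ x : ℝ → E, x t₀ = x₀ ∧ ∀ t ∈ Icc s s', HasDerivWithinAt x (f t (x t)) (Icc s s') t := by
  have hpl : IsPicardLindelof f (⟨t₀, ht₀⟩ : Icc s s') x₀ ‖x₀‖₊ 0 (2 * K * ‖x₀‖₊) K := by
    refine ⟨fun t _ => (hlip t).lipschitzOnWith, fun x _ => (hcont x).continuousOn,
      fun t _ x hx => ?_, ?_⟩
    · have hx' : ‖x - x₀‖ ≤ ‖x₀‖ := mem_closedBall_iff_norm.mp hx
      calc ‖f t x‖ = dist (f t x) (f t 0) := by rw [hf0, dist_zero_right]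
        _ ≤ K * ‖x‖ := by simpa using (hlip t).dist_le_mul x 0
        _ ≤ K * (‖x - x₀‖ + ‖x₀‖) := by gcongr; exact norm_le_norm_sub_add x x₀
        _ ≤ _ := by push_cast; nlinarith [K.coe_nonneg]
    · have hmax : max (s' - t₀) (t₀ - s) ≤ s' - s :=
        max_le (by linarith [ht₀.1]) (by linarith [ht₀.2])
      have hss : 0 ≤ s' - s := by linarith [ht₀.1, ht₀.2]
      push_cast
      calc 2 * K * ‖x₀‖ * max (s' - t₀) (t₀ - s) ≤ ‖x₀‖ * (2 * K * (s' - s)) := by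
            rw [mul_comm _ ‖x₀‖, mul_assoc]; gcongr
        _ ≤ ‖x₀‖ - 0 := by rw [sub_zero]; nlinarith [norm_nonneg x₀]
  exact hpl.exists_eq_forall_mem_Icc_hasDerivWithinAt₀

theorem exists_hasDerivWithinAt_Icc_neg_nat_mul (hlip : ∀ t, LipschitzWith K (f t))
    (hcont : ∀ x, Continuous (f · x)) (hf0 : ∀ t, f t 0 = 0) {h : ℝ} (hh : 0 ≤ h)
    (hlen : (2 * K + 1) * h ≤ 1) (x₀ : E) (n : ℕ) :
    ∃ x : ℝ → E, x 0 = x₀ ∧ ∀ t ∈ Icc (-(n * h)) (n * h),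
      HasDerivWithinAt x (f t (x t)) (Icc (-(n * h)) (n * h)) t := by
  induction n with
  | zero =>
    simpa using exists_hasDerivWithinAt_Icc_of_lipschitzWith hlip hcont hf0
      (left_mem_Icc.2 le_rfl) (by simp) x₀
  | succ n ih =>
    obtain ⟨x, hx0, hx⟩ := ih
    have hnh : 0 ≤ n * h := by positivity
    have hstep : (2 * K + 1) * ((n + 1 : ℕ) * h - n * h) ≤ 1 := by push_cast; linarith
    obtain ⟨y, hyx, hy⟩ := exists_hasDerivWithinAt_Icc_of_lipschitzWith hlip hcont hf0
      (left_mem_Icc.2 (by push_cast; linarith)) hstep (x (n * h))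
    obtain ⟨z, hzx, -, hz⟩ := exists_hasDerivWithinAt_Icc_glue (by linarith)
      (by push_cast; linarith) hyx.symm hx hy
    obtain ⟨w, hwz, hw⟩ := exists_hasDerivWithinAt_Icc_of_lipschitzWith hlip hcont hf0
      (s := -((n + 1 : ℕ) * h)) (s' := -(n * h)) (right_mem_Icc.2 (by push_cast; linarith))
      (by push_cast; linarith) (z (-(n * h)))
    obtain ⟨v, -, hvz, hv⟩ := exists_hasDerivWithinAt_Icc_glue (b := -(n * h))
      (by push_cast; linarith) (by push_cast; linarith) hwz hw hz
    refine ⟨v, ?_, hv⟩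
    rw [hvz ⟨by linarith, by positivity⟩, hzx ⟨by linarith, hnh⟩, hx0]

theorem exists_forall_hasDerivAt_of_lipschitzWith (hlip : ∀ t, LipschitzWith K (f t))
    (hcont : ∀ x, Continuous (f · x)) (hf0 : ∀ t, f t 0 = 0) (x₀ : E) :
    ∃ x : ℝ → E, x 0 = x₀ ∧ ∀ t, HasDerivAt x (f t (x t)) t := by
  set h : ℝ := 1 / (2 * K + 1)
  have hh : 0 < h := by positivity
  have hlen : (2 * K + 1) * h ≤ 1 := by rw [mul_one_div_cancel (by positivity)]
  choose xs hxs0 hxs using exists_hasDerivWithinAt_Icc_neg_nat_mul hlip hcont hf0 hh.le hlen x₀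
  have hderiv : ∀ (n : ℕ) t, |t| < n * h → HasDerivAt (xs n) (f t (xs n t)) t := fun n t ht =>
    (hxs n t ⟨by linarith [neg_abs_le t], by linarith [le_abs_self t]⟩).hasDerivAt
      (Icc_mem_nhds (by linarith [neg_abs_le t]) (by linarith [le_abs_self t]))
  have hagree : ∀ (m n : ℕ) t, |t| < m * h → |t| < n * h → xs m t = xs n t := by
    intro m n t hm hn
    obtain ⟨r, htr, hrm, hrn⟩ : ∃ r, |t| < r ∧ r < m * h ∧ r < n * h :=
      ⟨(|t| + min (m * h) (n * h)) / 2, by linarith [lt_min hm hn],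
        by linarith [lt_min hm hn, min_le_left (m * h) (n * h)],
        by linarith [lt_min hm hn, min_le_right (m * h) (n * h)]⟩
    have hsol : ∀ k : ℕ, r < k * h → ∀ s ∈ Icc (-r) r, HasDerivAt (xs k) (f s (xs k s)) s :=
      fun k hk s hs => hderiv k s ((abs_le.2 hs).trans_lt hk)
    exact ODE_solution_unique_of_mem_Icc (s := fun _ => univ) (t₀ := 0)
      (fun s _ => (hlip s).lipschitzOnWith) ⟨by linarith [abs_nonneg t], by linarith [abs_nonneg t]⟩
      (HasDerivAt.continuousOn (hsol m hrm)) (fun s hs => hsol m hrm s (Ioo_subset_Icc_self hs))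
      (fun _ _ => trivial)
      (HasDerivAt.continuousOn (hsol n hrn)) (fun s hs => hsol n hrn s (Ioo_subset_Icc_self hs))
      (fun _ _ => trivial) (by rw [hxs0, hxs0])
      ⟨by linarith [neg_abs_le t], by linarith [le_abs_self t]⟩
  set N : ℝ → ℕ := fun t => ⌈|t| / h⌉₊ + 1
  have hN : ∀ t, |t| < N t * h := fun t => by
    rw [← div_lt_iff₀ hh]; push_cast [N]; linarith [Nat.le_ceil (|t| / h)]
  refine ⟨fun t => xs (N t) t, hxs0 _, fun t => ?_⟩
  have hev : (fun s => xs (N s) s) =ᶠ[𝓝 t] xs (N t) := by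
    filter_upwards [(continuous_abs.tendsto t).eventually (gt_mem_nhds (hN t))] with s hs
    exact hagree _ _ _ (hN s) hs
  simpa [hev.eq_of_nhds] using (hderiv _ t (hN t)).congr_of_eventuallyEq hev

end ODE

theorem exists_contDiff_two_deriv_deriv_eq {α β : ℝ → ℝ} (hα : Continuous α)
    (hβ : Continuous β) {A B : ℝ} (hA : ∀ t, |α t| ≤ A) (hB : ∀ t, |β t| ≤ B) (p v : ℝ) :
    ∃ ψ : ℝ → ℝ, ContDiff ℝ 2 ψ ∧ ψ 0 = p ∧ deriv ψ 0 = v ∧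
      ∀ t, deriv (deriv ψ) t = α t * ψ t + β t * deriv ψ t := by
  set f : ℝ → ℝ × ℝ → ℝ × ℝ := fun t q => (q.2, α t * q.1 + β t * q.2)
  have hA0 : 0 ≤ A := (abs_nonneg _).trans (hA 0)
  have hB0 : 0 ≤ B := (abs_nonneg _).trans (hB 0)
  have hlip : ∀ t, LipschitzWith (1 + A + B).toNNReal (f t) := fun t =>
    LipschitzWith.of_dist_le_mul fun q q' => by
      rw [Real.coe_toNNReal _ (by linarith), Prod.dist_eq, Prod.dist_eq]
      have h₁ := le_max_left (dist q.1 q'.1) (dist q.2 q'.2)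
      have h₂ := le_max_right (dist q.1 q'.1) (dist q.2 q'.2)
      have hlin : dist (α t * q.1 + β t * q.2) (α t * q'.1 + β t * q'.2)
          ≤ A * dist q.1 q'.1 + B * dist q.2 q'.2 := by
        simp only [Real.dist_eq]
        calc |α t * q.1 + β t * q.2 - (α t * q'.1 + β t * q'.2)|
            = |α t * (q.1 - q'.1) + β t * (q.2 - q'.2)| := by ring_nf
          _ ≤ |α t| * |q.1 - q'.1| + |β t| * |q.2 - q'.2| := by
            rw [← abs_mul, ← abs_mul]; exact abs_add_le _ _
          _ ≤ _ := by gcongr <;> simp [hA, hB]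
      apply max_le <;> nlinarith [dist_nonneg (x := q.1) (y := q'.1),
        dist_nonneg (x := q.2) (y := q'.2)]
  obtain ⟨x, hx0, hx⟩ := exists_forall_hasDerivAt_of_lipschitzWith hlip
    (fun q => by fun_prop) (fun t => by simp [f]) (p, v)
  have h₁ : ∀ t, HasDerivAt (fun s => (x s).1) (x t).2 t := fun t => by
    simpa [f] using (hx t).hasFDerivAt.fst.hasDerivAt
  have h₂ : ∀ t, HasDerivAt (fun s => (x s).2) (α t * (x t).1 + β t * (x t).2) t := fun t => by
    simpa [f] using (hx t).hasFDerivAt.snd.hasDerivAt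
  have hd₁ : deriv (fun s => (x s).1) = fun s => (x s).2 := funext fun t => (h₁ t).deriv
  have hd₂ : deriv (fun s => (x s).2) = fun t => α t * (x t).1 + β t * (x t).2 :=
    funext fun t => (h₂ t).deriv
  refine ⟨fun s => (x s).1, ?_, by simp [hx0], by simp [hd₁, hx0], fun t => by simp [hd₁, hd₂]⟩
  rw [show (2 : WithTop ℕ∞) = 1 + 1 from rfl, contDiff_succ_iff_deriv, hd₁]
  refine ⟨fun t => (h₁ t).differentiableAt, by simp, ?_⟩
  rw [contDiff_one_iff_deriv, hd₂]
  have hxc : Continuous x := continuous_iff_continuousAt.2 fun t => (hx t).continuousAt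
  exact ⟨fun t => (h₂ t).differentiableAt, by fun_prop⟩

section MaximumPrinciple

variable {D c w w' g : ℝ → ℝ} {a b : ℝ}

theorem nonpos_of_mul_le_deriv_flux (hD : ∀ y ∈ Ioo a b, 0 < D y)
    (hc : ∀ y ∈ Ioo a b, 0 < c y) (hw : ContinuousOn w (Icc a b))
    (hw' : ∀ y ∈ Ioo a b, HasDerivAt w (w' y) y)
    (hg : ∀ y ∈ Ioo a b, HasDerivAt (fun z => D z * w' z) (g y) y)
    (hwg : ∀ y ∈ Ioo a b, c y * w y ≤ g y) (ha : w a ≤ 0) (hb : w b ≤ 0) :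
    ∀ y ∈ Icc a b, w y ≤ 0 := by
  by_contra! hpos
  obtain ⟨y₁, hy₁, hwy₁⟩ := hpos
  obtain ⟨y₀, hy₀, hmax⟩ := isCompact_Icc.exists_isMaxOn ⟨y₁, hy₁⟩ hw
  have hw₀ : 0 < w y₀ := hwy₁.trans_le (hmax hy₁)
  have hy₀' : y₀ ∈ Ioo a b := ⟨hy₀.1.lt_of_ne (by rintro rfl; linarith),
    hy₀.2.lt_of_ne (by rintro rfl; linarith)⟩
  have hw'₀ : w' y₀ = 0 :=
    (hmax.isLocalMax (Icc_mem_nhds hy₀'.1 hy₀'.2)).hasDerivAt_eq_zero (hw' y₀ hy₀')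
  obtain ⟨r, hy₀r, hr⟩ : ∃ r, y₀ < r ∧ Icc y₀ r ⊆ {z | z ∈ Ioo a b ∧ 0 < w z} :=
    mem_nhdsGE_iff_exists_Icc_subset.1 <| nhdsWithin_le_nhds <|
      (show ∀ᶠ z in 𝓝 y₀, z ∈ Ioo a b from Ioo_mem_nhds hy₀'.1 hy₀'.2).and
        ((hw' y₀ hy₀').continuousAt.eventually (lt_mem_nhds hw₀))
  have hIoo : ∀ z ∈ Ioo y₀ r, z ∈ Ioo a b := fun z hz => (hr (Ioo_subset_Icc_self hz)).1
  rw [← interior_Icc] at hIoo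
  have hflux : StrictMonoOn (fun z => D z * w' z) (Icc y₀ r) :=
    strictMonoOn_of_hasDerivWithinAt_pos (convex_Icc y₀ r)
      (HasDerivAt.continuousOn fun z hz => hg z (hr hz).1)
      (fun z hz => (hg z (hIoo z hz)).hasDerivWithinAt)
      (fun z hz => (mul_pos (hc z (hIoo z hz)) (hr (interior_subset hz)).2).trans_le
        (hwg z (hIoo z hz)))
  have hw'pos : ∀ z ∈ interior (Icc y₀ r), 0 < w' z := by
    intro z hz
    have h := hflux (left_mem_Icc.2 hy₀r.le) (interior_subset hz)
      (by rw [interior_Icc] at hz; exact hz.1)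
    simp only [hw'₀, mul_zero] at h
    exact pos_of_mul_pos_right h (hD z (hIoo z hz)).le
  have hwmono : StrictMonoOn w (Icc y₀ r) :=
    strictMonoOn_of_hasDerivWithinAt_pos (convex_Icc y₀ r)
      (HasDerivAt.continuousOn fun z hz => hw' z (hr hz).1)
      (fun z hz => (hw' z (hIoo z hz)).hasDerivWithinAt) hw'pos
  exact (hmax (Ioo_subset_Icc_self (hr (right_mem_Icc.2 hy₀r.le)).1)).not_gt
    (hwmono (left_mem_Icc.2 hy₀r.le) (right_mem_Icc.2 hy₀r.le) hy₀r)

theorem abs_le_max_abs_of_deriv_flux_eq (hD : ∀ y ∈ Ioo a b, 0 < D y)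
    (hc : ∀ y ∈ Ioo a b, 0 < c y) (hw : ContinuousOn w (Icc a b))
    (hw' : ∀ y ∈ Ioo a b, HasDerivAt w (w' y) y)
    (hg : ∀ y ∈ Ioo a b, HasDerivAt (fun z => D z * w' z) (c y * w y) y) :
    ∀ y ∈ Icc a b, |w y| ≤ max |w a| |w b| := by
  set m := max |w a| |w b|
  have hm : 0 ≤ m := (abs_nonneg _).trans (le_max_left _ _)
  have hupper := nonpos_of_mul_le_deriv_flux (w := fun y => w y - m) hD hc
    (hw.sub continuousOn_const) (fun y hy => (hw' y hy).sub_const m) hg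
    (fun y hy => by nlinarith [hc y hy]) (by linarith [le_abs_self (w a), le_max_left |w a| |w b|])
    (by linarith [le_abs_self (w b), le_max_right |w a| |w b|])
  have hlower := nonpos_of_mul_le_deriv_flux (w := fun y => -w y - m) (w' := fun y => -w' y) hD hc
    (hw.neg.sub continuousOn_const) (fun y hy => (hw' y hy).neg.sub_const m)
    (fun y hy => by simpa only [mul_neg] using (hg y hy).fun_neg)
    (fun y hy => by nlinarith [hc y hy]) (by linarith [neg_abs_le (w a), le_max_left |w a| |w b|])
    (by linarith [neg_abs_le (w b), le_max_right |w a| |w b|])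
  exact fun y hy => abs_le.2 ⟨by linarith [hlower y hy], by linarith [hupper y hy]⟩

end MaximumPrinciple

section Dirichlet

variable {D c u v : ℝ → ℝ} {H : ℝ}

theorem hasDerivAt_flux_of_contDiff (hD : ContDiff ℝ 1 D) (hu : ContDiff ℝ 2 u) (y : ℝ) :
    HasDerivAt (fun z => D z * deriv u z) (deriv (fun z => D z * deriv u z) y) y :=
  ((hD.mul (hu.deriv' (n := 1))).differentiable one_ne_zero y).hasDerivAt

theorem abs_le_max_abs_of_contDiff {a b : ℝ} (hD : ContDiff ℝ 1 D) (hu : ContDiff ℝ 2 u)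
    (hDpos : ∀ y ∈ Ioo a b, 0 < D y) (hcpos : ∀ y ∈ Ioo a b, 0 < c y)
    (heq : ∀ y ∈ Ioo a b, deriv (fun z => D z * deriv u z) y = c y * u y) :
    ∀ y ∈ Icc a b, |u y| ≤ max |u a| |u b| :=
  abs_le_max_abs_of_deriv_flux_eq hDpos hcpos hu.continuous.continuousOn
    (fun y _ => (hu.differentiable two_ne_zero y).hasDerivAt)
    (fun y hy => heq y hy ▸ hasDerivAt_flux_of_contDiff hD hu y)

theorem eqOn_of_contDiff_of_deriv_flux_eq {a b : ℝ} (hD : ContDiff ℝ 1 D)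
    (hu : ContDiff ℝ 2 u) (hv : ContDiff ℝ 2 v)
    (hDpos : ∀ y ∈ Ioo a b, 0 < D y) (hcpos : ∀ y ∈ Ioo a b, 0 < c y)
    (hequ : ∀ y ∈ Ioo a b, deriv (fun z => D z * deriv u z) y = c y * u y)
    (heqv : ∀ y ∈ Ioo a b, deriv (fun z => D z * deriv v z) y = c y * v y)
    (ha : u a = v a) (hb : u b = v b) : EqOn u v (Icc a b) := by
  have h := abs_le_max_abs_of_deriv_flux_eq (w := fun y => u y - v y)
    (w' := fun y => deriv u y - deriv v y) hDpos hcpos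
    (hu.continuous.sub hv.continuous).continuousOn
    (fun y _ => (hu.differentiable two_ne_zero y).hasDerivAt.sub
      (hv.differentiable two_ne_zero y).hasDerivAt)
    (fun y hy => by
      simpa only [mul_sub, hequ y hy, heqv y hy] using
        (hasDerivAt_flux_of_contDiff hD hu y).fun_sub (hasDerivAt_flux_of_contDiff hD hv y))
  intro y hy
  simpa [ha, hb, sub_eq_zero] using h y hy

theorem exists_forall_abs_comp_projIcc_le {g : ℝ → ℝ} {a b : ℝ} (hab : a ≤ b)
    (hg : ContinuousOn g (Icc a b)) : ∃ C, ∀ t, |g (projIcc a b hab t)| ≤ C :=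
  let ⟨C, hC⟩ := isCompact_Icc.exists_bound_of_continuousOn hg
  ⟨C, fun t => hC _ (projIcc a b hab t).2⟩

theorem exists_contDiff_deriv_flux_eq (hH : 0 ≤ H) (hD : ContDiff ℝ 1 D) (hc : Continuous c)
    (hDpos : ∀ y ∈ Icc 0 H, 0 < D y) :
    ∃ ψ : ℝ → ℝ, ContDiff ℝ 2 ψ ∧ ψ 0 = 0 ∧ deriv ψ 0 = 1 ∧
      ∀ y ∈ Icc 0 H, deriv (fun z => D z * deriv ψ z) y = c y * ψ y := by
  set p : ℝ → ℝ := fun t => projIcc 0 H hH t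
  have hp : Continuous p := continuous_subtype_val.comp continuous_projIcc
  have hpy : ∀ y ∈ Icc 0 H, p y = y := fun y hy => by simp [p, projIcc_of_mem _ hy]
  have hDp : ∀ t, D (p t) ≠ 0 := fun t => (hDpos _ (projIcc 0 H hH t).2).ne'
  -- `(D ψ')' = c ψ` rewritten as `ψ'' = α ψ + β ψ'`, with coefficients frozen outside `[0, H]`
  obtain ⟨A, hA⟩ := exists_forall_abs_comp_projIcc_le hH
    (hc.continuousOn.div hD.continuous.continuousOn fun y hy => (hDpos y hy).ne')
  obtain ⟨B, hB⟩ := exists_forall_abs_comp_projIcc_le hH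
    ((hD.continuous_deriv le_rfl).continuousOn.neg.div hD.continuous.continuousOn
      fun y hy => (hDpos y hy).ne')
  obtain ⟨ψ, hψ, hψ0, hψ'0, hψ''⟩ := exists_contDiff_two_deriv_deriv_eq
    (α := fun t => c (p t) / D (p t)) (β := fun t => -deriv D (p t) / D (p t))
    ((hc.comp hp).div (hD.continuous.comp hp) hDp)
    (((hD.continuous_deriv le_rfl).comp hp).neg.div (hD.continuous.comp hp) hDp) hA hB 0 1
  refine ⟨ψ, hψ, hψ0, hψ'0, fun y hy => ?_⟩
  rw [deriv_fun_mul (hD.differentiable one_ne_zero y)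
    ((hψ.deriv' (n := 1)).differentiable one_ne_zero y), hψ'' y, hpy y hy]
  field_simp [(hDpos y hy).ne']
  ring

theorem exists_contDiff_dirichlet (hH : 0 < H) (hD : ContDiff ℝ 1 D) (hc : Continuous c)
    (hDpos : ∀ y ∈ Icc 0 H, 0 < D y) (hcpos : ∀ y ∈ Icc 0 H, 0 < c y) :
    ∃ u : ℝ → ℝ, ContDiff ℝ 2 u ∧ u 0 = 0 ∧ u H = 1 ∧
      ∀ y ∈ Ioo 0 H, deriv (fun z => D z * deriv u z) y = c y * u y := by
  obtain ⟨ψ, hψ, hψ0, hψ'0, hψeq⟩ := exists_contDiff_deriv_flux_eq hH.le hD hc hDpos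
  have hψd : Differentiable ℝ ψ := hψ.differentiable two_ne_zero
  have hψH : ψ H ≠ 0 := by
    intro hψH
    have hzero : EqOn ψ 0 (Icc 0 H) := fun y hy => abs_nonpos_iff.1 <| by
      simpa [hψ0, hψH] using abs_le_max_abs_of_contDiff hD hψ
        (fun y hy => hDpos y (Ioo_subset_Icc_self hy))
        (fun y hy => hcpos y (Ioo_subset_Icc_self hy))
        (fun y hy => hψeq y (Ioo_subset_Icc_self hy)) y hy
    -- `ψ` would vanish on `[0, H]` while having slope `1` at `0`
    have h₁ : HasDerivWithinAt ψ 1 (Icc 0 H) 0 := hψ'0 ▸ (hψd 0).hasDerivAt.hasDerivWithinAt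
    have h₀ : HasDerivWithinAt ψ 0 (Icc 0 H) 0 :=
      (hasDerivWithinAt_const 0 _ (0 : ℝ)).congr hzero (hzero (left_mem_Icc.2 hH.le))
    exact one_ne_zero ((uniqueDiffOn_Icc hH 0 (left_mem_Icc.2 hH.le)).eq_deriv _ h₁ h₀)
  have hderiv : deriv (fun y => (ψ H)⁻¹ * ψ y) = fun y => (ψ H)⁻¹ * deriv ψ y :=
    funext fun y => deriv_const_mul _ (hψd y)
  refine ⟨fun y => (ψ H)⁻¹ * ψ y, contDiff_const.mul hψ, by simp [hψ0], inv_mul_cancel₀ hψH,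
    fun y hy => ?_⟩
  simp only [hderiv, mul_left_comm (D _)]
  rw [deriv_const_mul _ (hasDerivAt_flux_of_contDiff hD hψ y).differentiableAt,
    hψeq y (Ioo_subset_Icc_self hy)]
  ring

end Dirichlet

theorem abs_le_div_of_abs_mul_le {d d₀ x K : ℝ} (hd₀ : 0 < d₀) (hd : d₀ ≤ d) (h : |d * x| ≤ K) :
    |x| ≤ K / d₀ := by
  rw [abs_mul, abs_of_pos (hd₀.trans_le hd)] at h
  rw [le_div_iff₀ hd₀]
  nlinarith [abs_nonneg x]

section OpticalBVP

variable {H L D0 mu0 M : ℝ} {k : ℤ} {D mu u : ℝ → ℝ}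

theorem InOM.contDiff_one (hOM : InOM H D0 mu0 M D mu) : ContDiff ℝ 1 D :=
  hOM.1.of_le (by norm_num)

theorem InOM.pos (hOM : InOM H D0 mu0 M D mu) (hD0 : 0 ≤ D0) : ∀ y ∈ Icc 0 H, 0 < D y :=
  fun y hy => hD0.trans_lt (hOM.2.2.1 y hy)

theorem InOM.coeff_pos (hOM : InOM H D0 mu0 M D mu) (hD0 : 0 ≤ D0) (hmu0 : 0 ≤ mu0) :
    ∀ y ∈ Icc 0 H, 0 < mu y + lamk L k ^ 2 * D y := fun y hy =>
  add_pos_of_pos_of_nonneg (hmu0.trans_lt (hOM.2.2.2.1 y hy))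
    (mul_nonneg (sq_nonneg _) (hOM.pos hD0 y hy).le)

theorem InOM.abs_le (hOM : InOM H D0 mu0 M D mu) : ∀ y ∈ Icc 0 H, |D y| ≤ M := by
  simpa using hOM.2.2.2.2.1 0 (by norm_num)

theorem InOM.abs_deriv_le (hOM : InOM H D0 mu0 M D mu) : ∀ y ∈ Icc 0 H, |deriv D y| ≤ M := by
  simpa using hOM.2.2.2.2.1 1 (by norm_num)

theorem InOM.abs_coeff_le (hOM : InOM H D0 mu0 M D mu) :
    ∀ y ∈ Icc 0 H, |mu y + lamk L k ^ 2 * D y| ≤ (1 + lamk L k ^ 2) * M := fun y hy => by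
  have hmu : |mu y| ≤ M := by simpa using hOM.2.2.2.2.2 0 (by norm_num) y hy
  calc |mu y + lamk L k ^ 2 * D y| ≤ |mu y| + lamk L k ^ 2 * |D y| :=
        (abs_add_le _ _).trans_eq (by rw [abs_mul, abs_of_nonneg (sq_nonneg (lamk L k))])
    _ ≤ M + lamk L k ^ 2 * M := by gcongr; exact hOM.abs_le y hy
    _ = (1 + lamk L k ^ 2) * M := by ring

theorem IsSol.deriv_flux_eq (hu : IsSol H L k D mu u) :
    ∀ y ∈ Ioo 0 H, deriv (fun z => D z * deriv u z) y = (mu y + lamk L k ^ 2 * D y) * u y :=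
  fun y hy => neg_add_eq_zero.1 (hu.2.2.2 y hy)

theorem IsSol.eqOn {v : ℝ → ℝ} (hu : IsSol H L k D mu u) (hv : IsSol H L k D mu v)
    (hOM : InOM H D0 mu0 M D mu) (hD0 : 0 ≤ D0) (hmu0 : 0 ≤ mu0) : EqOn u v (Icc 0 H) :=
  eqOn_of_contDiff_of_deriv_flux_eq hOM.contDiff_one hu.1 hv.1
    (fun y hy => hOM.pos hD0 y (Ioo_subset_Icc_self hy))
    (fun y hy => hOM.coeff_pos hD0 hmu0 y (Ioo_subset_Icc_self hy)) hu.deriv_flux_eq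
    hv.deriv_flux_eq (hu.2.1.trans hv.2.1.symm) (hu.2.2.1.trans hv.2.2.1.symm)

theorem InOM.exists_isSol (hOM : InOM H D0 mu0 M D mu) (hH : 0 < H) (hD0 : 0 ≤ D0)
    (hmu0 : 0 ≤ mu0) : ∃ u, IsSol H L k D mu u := by
  obtain ⟨u, hu, hu0, huH, heq⟩ := exists_contDiff_dirichlet hH hOM.contDiff_one
    (hOM.2.1.continuous.add (continuous_const.mul hOM.1.continuous)) (hOM.pos hD0)
    (hOM.coeff_pos (L := L) (k := k) hD0 hmu0)
  exact ⟨u, hu, hu0, huH, fun y hy => neg_add_eq_zero.2 (heq y hy)⟩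

theorem IsSol.abs_le_one (hu : IsSol H L k D mu u) (hOM : InOM H D0 mu0 M D mu) (hD0 : 0 ≤ D0)
    (hmu0 : 0 ≤ mu0) : ∀ y ∈ Icc 0 H, |u y| ≤ 1 := by
  simpa [hu.2.1, hu.2.2.1] using abs_le_max_abs_of_contDiff hOM.contDiff_one hu.1
    (fun y hy => hOM.pos hD0 y (Ioo_subset_Icc_self hy))
    (fun y hy => hOM.coeff_pos hD0 hmu0 y (Ioo_subset_Icc_self hy)) hu.deriv_flux_eq

theorem IsSol.deriv_flux_eqOn_Icc (hu : IsSol H L k D mu u) (hOM : InOM H D0 mu0 M D mu)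
    (hH : 0 < H) :
    EqOn (deriv fun z => D z * deriv u z) (fun y => (mu y + lamk L k ^ 2 * D y) * u y)
      (Icc 0 H) :=
  EqOn.of_subset_closure hu.deriv_flux_eq
    ((hOM.contDiff_one.mul (hu.1.deriv' (n := 1))).continuous_deriv le_rfl).continuousOn
    ((hOM.2.1.continuous.add (continuous_const.mul hOM.1.continuous)).mul
      hu.1.continuous).continuousOn
    Ioo_subset_Icc_self (closure_Ioo hH.ne).ge

theorem IsSol.abs_flux_le (hu : IsSol H L k D mu u) (hOM : InOM H D0 mu0 M D mu) (hH : 0 < H)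
    (hD0 : 0 ≤ D0) (hmu0 : 0 ≤ mu0) :
    ∀ y ∈ Icc 0 H, |D y * deriv u y| ≤ M / H + (1 + lamk L k ^ 2) * M * H := by
  set F : ℝ → ℝ := fun z => D z * deriv u z
  have hF : Differentiable ℝ F :=
    (hOM.contDiff_one.mul (hu.1.deriv' (n := 1))).differentiable one_ne_zero
  have hF' : ∀ y ∈ Icc 0 H, ‖deriv F y‖ ≤ (1 + lamk L k ^ 2) * M := fun y hy => by
    rw [Real.norm_eq_abs, hu.deriv_flux_eqOn_Icc hOM hH hy, abs_mul]
    exact (mul_le_of_le_one_right (abs_nonneg _) (hu.abs_le_one hOM hD0 hmu0 y hy)).trans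
      (hOM.abs_coeff_le y hy)
  obtain ⟨ξ, hξ, hξu⟩ := exists_deriv_eq_slope u hH hu.1.continuous.continuousOn
    (hu.1.differentiable two_ne_zero).differentiableOn
  rw [hu.2.2.1, hu.2.1, sub_zero, sub_zero] at hξu
  have hFξ : |F ξ| ≤ M / H := by
    simp only [F, hξu, abs_div, abs_of_pos hH, mul_one_div]
    gcongr
    exact hOM.abs_le ξ (Ioo_subset_Icc_self hξ)
  intro y hy
  have hmvt := Convex.norm_image_sub_le_of_norm_deriv_le (fun z _ => hF z) hF' (convex_Icc 0 H)
    (Ioo_subset_Icc_self hξ) hy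
  rw [Real.norm_eq_abs, Real.norm_eq_abs] at hmvt
  have hyξ : |y - ξ| ≤ H := abs_sub_le_iff.2 ⟨by linarith [hy.2, hξ.1], by linarith [hy.1, hξ.2]⟩
  have hC : 0 ≤ (1 + lamk L k ^ 2) * M := (norm_nonneg _).trans (hF' y hy)
  nlinarith [abs_sub_abs_le_abs_sub (F y) (F ξ), mul_le_mul_of_nonneg_left hyξ hC]

noncomputable def derivBound (H D0 M lam : ℝ) : ℝ := (M / H + (1 + lam ^ 2) * M * H) / D0

noncomputable def secondDerivBound (H D0 M lam : ℝ) : ℝ :=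
  ((1 + lam ^ 2) * M + M * derivBound H D0 M lam) / D0

theorem IsSol.abs_deriv_le (hu : IsSol H L k D mu u) (hOM : InOM H D0 mu0 M D mu) (hH : 0 < H)
    (hD0 : 0 < D0) (hmu0 : 0 ≤ mu0) :
    ∀ y ∈ Icc 0 H, |deriv u y| ≤ derivBound H D0 M (lamk L k) := fun y hy =>
  abs_le_div_of_abs_mul_le hD0 (hOM.2.2.1 y hy).le (hu.abs_flux_le hOM hH hD0.le hmu0 y hy)

theorem IsSol.abs_deriv_deriv_le (hu : IsSol H L k D mu u) (hOM : InOM H D0 mu0 M D mu)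
    (hH : 0 < H) (hD0 : 0 < D0) (hmu0 : 0 ≤ mu0) :
    ∀ y ∈ Icc 0 H, |deriv (deriv u) y| ≤ secondDerivBound H D0 M (lamk L k) := fun y hy => by
  have heq : deriv (fun z => D z * deriv u z) y = (mu y + lamk L k ^ 2 * D y) * u y :=
    hu.deriv_flux_eqOn_Icc hOM hH hy
  rw [deriv_fun_mul (hOM.contDiff_one.differentiable one_ne_zero y)
    ((hu.1.deriv' (n := 1)).differentiable one_ne_zero y)] at heq
  refine abs_le_div_of_abs_mul_le hD0 (hOM.2.2.1 y hy).le ?_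
  calc |D y * deriv (deriv u) y|
      = |(mu y + lamk L k ^ 2 * D y) * u y - deriv D y * deriv u y| := by
        congr 1; linarith
    _ ≤ |mu y + lamk L k ^ 2 * D y| * |u y| + |deriv D y| * |deriv u y| := by
        rw [← abs_mul, ← abs_mul]; exact abs_sub _ _
    _ ≤ (1 + lamk L k ^ 2) * M * 1 + M * derivBound H D0 M (lamk L k) := by
        gcongr
        · exact (abs_nonneg _).trans (hOM.abs_coeff_le y hy)
        · exact hOM.abs_coeff_le y hy
        · exact hu.abs_le_one hOM hD0.le hmu0 y hy
        · exact (abs_nonneg _).trans (hOM.abs_deriv_le y hy)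
        · exact hOM.abs_deriv_le y hy
        · exact hu.abs_deriv_le hOM hH hD0 hmu0 y hy
    _ = _ := by ring

theorem cNorm0_le {H B : ℝ} {f : ℝ → ℝ} (hH : 0 ≤ H) (hf : ∀ y ∈ Icc 0 H, |f y| ≤ B) :
    cNorm0 H f ≤ B :=
  csSup_le ((nonempty_Icc.2 hH).image _) (forall_mem_image.2 hf)

theorem IsSol.cNorm2_le (hu : IsSol H L k D mu u) (hOM : InOM H D0 mu0 M D mu) (hH : 0 < H)
    (hD0 : 0 < D0) (hmu0 : 0 ≤ mu0) :
    cNorm2 H u ≤ 1 + derivBound H D0 M (lamk L k) + secondDerivBound H D0 M (lamk L k) :=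
  add_le_add (add_le_add (cNorm0_le hH.le (hu.abs_le_one hOM hD0.le hmu0))
    (cNorm0_le hH.le (hu.abs_deriv_le hOM hH hD0 hmu0)))
    (cNorm0_le hH.le (hu.abs_deriv_deriv_le hOM hH hD0 hmu0))

end OpticalBVP

theorem optical_bvp_wellposed_general
    (H L D0 mu0 M : ℝ) (k : ℤ)
    (hH : 0 < H) (hD0 : 0 < D0) (hmu0 : 0 < mu0)
    (hM : max D0 mu0 < M) :
    (∀ D mu : ℝ → ℝ, InOM H D0 mu0 M D mu →
      (∃ u : ℝ → ℝ, IsSol H L k D mu u) ∧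
      (∀ u v : ℝ → ℝ, IsSol H L k D mu u → IsSol H L k D mu v →
        Set.EqOn u v (Set.Icc 0 H)))
    ∧ ∃ b > (0 : ℝ), ∀ D mu : ℝ → ℝ, InOM H D0 mu0 M D mu →
        ∀ u : ℝ → ℝ, IsSol H L k D mu u → cNorm2 H u ≤ b := by
  have hM0 : 0 < M := hD0.trans ((le_max_left D0 mu0).trans_lt hM)
  refine ⟨fun D mu hOM => ⟨hOM.exists_isSol hH hD0.le hmu0.le,
    fun u v hu hv => hu.eqOn hv hOM hD0.le hmu0.le⟩,
    1 + derivBound H D0 M (lamk L k) + secondDerivBound H D0 M (lamk L k), ?_,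
    fun D mu hOM u hu => hu.cNorm2_le hOM hH hD0 hmu0.le⟩
  unfold secondDerivBound derivBound
  positivity

theorem optical_bvp_wellposed
    (H L D0 mu0 M : ℝ) (k : ℤ)
    (hH : 0 < H) (hL : 0 < L) (hD0 : 0 < D0) (hmu0 : 0 < mu0)
    (hM : max D0 mu0 < M) :
    (∀ D mu : ℝ → ℝ, InOM H D0 mu0 M D mu →
      (∃ u : ℝ → ℝ, IsSol H L k D mu u) ∧
      (∀ u v : ℝ → ℝ, IsSol H L k D mu u → IsSol H L k D mu v →
        Set.EqOn u v (Set.Icc 0 H)))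
    ∧ ∃ b > (0 : ℝ), ∀ D mu : ℝ → ℝ, InOM H D0 mu0 M D mu →
        ∀ u : ℝ → ℝ, IsSol H L k D mu u → cNorm2 H u ≤ b :=
  optical_bvp_wellposed_general H L D0 mu0 M k hH hD0 hmu0 hM
end

section
/- Let 0 < k_1 < k_2 be integers and assume κ_m(k_1) > 0 (where κ_m(k_1) = min_{[0,H]}((√D)″/√D + μ/D + λ_{k_1}²)). Define h = u_{k_2}/u_{k_1} on (0,H]. Then h is C² on (0,H], extends continuously to [0,H] with h(0) = lim_{y→0+} h(y) = u_{k_2}′(0)/u_{k_1}′(0), satisfies h(H) = 1, and obeys the first-order identity D(y)·u_{k_1}(y)²·h′(y) = (λ_{k_2}² − λ_{k_1}²)·∫_0^y D(s)·u_{k_1}(s)·u_{k_2}(s) ds for every y ∈ (0,H]; in particular −(D u_{k_1}² h′)′(y) + (λ_{k_2}² − λ_{k_1}²)·D(y)·u_{k_1}(y)²·h(y) = 0 on (0,H) and lim_{y→0+} D(y)u_{k_1}(y)²h′(y) = 0. -/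
open Set Filter Topology

section SturmLiouville

variable {D c u : ℝ → ℝ} {a b : ℝ}

/-- Cauchy uniqueness for `(D u')' = c u`: Grönwall's inequality applied to the pair
`(u, D u')`, which solves the linear first-order system `(u, g)' = (g / D, c u)`. -/
theorem eqOn_zero_of_hasDerivAt_flux (hu : Differentiable ℝ u) (hD : ContinuousOn D (Icc a b))
    (hD0 : ∀ t ∈ Icc a b, D t ≠ 0) (hc : ContinuousOn c (Icc a b))
    (hflux : ∀ t ∈ Icc a b, HasDerivAt (fun z => D z * deriv u z) (c t * u t) t)
    (hua : u a = 0) (hu'a : deriv u a = 0) : EqOn u 0 (Icc a b) := by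
  set g := fun z => D z * deriv u z
  obtain ⟨K, hK⟩ := isCompact_Icc.exists_bound_of_continuousOn ((hD.inv₀ hD0).prodMk hc)
  have hg : ContinuousOn g (Icc a b) := fun t ht => (hflux t ht).continuousAt.continuousWithinAt
  have hzero := eq_zero_of_abs_deriv_le_mul_abs_self_of_eq_zero_right
    (f := fun t => (u t, g t)) (f' := fun t => (g t / D t, c t * u t)) (K := K)
    (hu.continuous.continuousOn.prodMk hg) (fun t ht => ?_) (by simp [g, hua, hu'a])
    (fun t ht => ?_)
  · exact fun t ht => congrArg Prod.fst (hzero t ht)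
  · have hu' : deriv u t = g t / D t := by
      rw [mul_div_cancel_left₀ _ (hD0 t (Ico_subset_Icc_self ht))]
    exact ((hu' ▸ (hu t).hasDerivAt).prodMk (hflux t (Ico_subset_Icc_self ht))).hasDerivWithinAt
  · have hKt := hK t (Ico_subset_Icc_self ht)
    simp only [Prod.norm_def, Real.norm_eq_abs, max_le_iff] at hKt ⊢
    have hK0 : 0 ≤ K := (abs_nonneg _).trans hKt.1
    constructor
    · calc |g t / D t| = |(D t)⁻¹| * |g t| := by rw [div_eq_inv_mul, abs_mul]
        _ ≤ K * max |u t| |g t| := mul_le_mul hKt.1 (le_max_right _ _) (abs_nonneg _) hK0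
    · calc |c t * u t| = |c t| * |u t| := abs_mul _ _
        _ ≤ K * max |u t| |g t| := mul_le_mul hKt.2 (le_max_left _ _) (abs_nonneg _) hK0

/-- The energy `u · D u'` has derivative `D u'² + c u² > 0`, so it is strictly increasing from
`0`; hence `u` has no zero in `(a, b]`, and `u(b) > 0` fixes its sign. -/
theorem pos_and_deriv_pos_of_hasDerivAt_flux (hab : a < b) (hu : Differentiable ℝ u)
    (hD : ContinuousOn D (Icc a b)) (hDpos : ∀ t ∈ Icc a b, 0 < D t)
    (hc : ContinuousOn c (Icc a b)) (hcpos : ∀ t ∈ Ioo a b, 0 < c t)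
    (hflux : ∀ t ∈ Icc a b, HasDerivAt (fun z => D z * deriv u z) (c t * u t) t)
    (hua : u a = 0) (hub : 0 < u b) : (∀ t ∈ Ioc a b, 0 < u t) ∧ 0 < deriv u a := by
  have hCauchy : ∀ t ∈ Ico a b, u t = 0 → deriv u t ≠ 0 := fun t ht h0 h1 => by
    have hsub : Icc t b ⊆ Icc a b := Icc_subset_Icc_left ht.1
    exact hub.ne' <| eqOn_zero_of_hasDerivAt_flux hu (hD.mono hsub)
      (fun s hs => (hDpos s (hsub hs)).ne') (hc.mono hsub) (fun s hs => hflux s (hsub hs)) h0 h1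
      ⟨ht.2.le, le_rfl⟩
  set E := fun t => u t * (D t * deriv u t)
  have hE : ∀ t ∈ Icc a b, HasDerivAt E (D t * deriv u t ^ 2 + c t * u t ^ 2) t :=
    fun t ht => ((hu t).hasDerivAt.mul (hflux t ht)).congr_deriv (by ring)
  have hEmono : StrictMonoOn E (Icc a b) := by
    refine strictMonoOn_of_deriv_pos (convex_Icc a b)
      (fun t ht => (hE t ht).continuousAt.continuousWithinAt) fun t ht => ?_
    rw [interior_Icc] at ht
    rw [(hE t (Ioo_subset_Icc_self ht)).deriv]
    have hDt := hDpos t (Ioo_subset_Icc_self ht)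
    have hct := hcpos t ht
    by_cases h0 : u t = 0
    · have := sq_pos_of_ne_zero (hCauchy t (Ioo_subset_Ico_self ht) h0)
      exact add_pos_of_pos_of_nonneg (mul_pos hDt this) (by positivity)
    · have := sq_pos_of_ne_zero h0
      exact add_pos_of_nonneg_of_pos (by positivity) (mul_pos hct this)
  have hEpos : ∀ t ∈ Ioc a b, 0 < E t := fun t ht => by
    simpa [E, hua] using hEmono (left_mem_Icc.2 hab.le) (Ioc_subset_Icc_self ht) ht.1
  have hne : ∀ t ∈ Ioc a b, u t ≠ 0 := fun t ht h0 => by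
    simpa [E, h0] using hEpos t ht
  have hpos : ∀ t ∈ Ioc a b, 0 < u t := fun t ht => by
    by_contra! hneg
    obtain ⟨s, hs, hs0⟩ := intermediate_value_Icc ht.2 hu.continuous.continuousOn
      ⟨hneg, hub.le⟩
    exact hne s ⟨ht.1.trans_le hs.1, hs.2⟩ hs0
  refine ⟨hpos, (hCauchy a (left_mem_Ico.2 hab) hua).symm.lt_of_le ?_⟩
  have hslope := (hasDerivAt_iff_tendsto_slope.mp (hu a).hasDerivAt).mono_left
    (nhdsGT_le_nhdsNE a)
  refine ge_of_tendsto hslope ?_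
  filter_upwards [Ioc_mem_nhdsGT hab] with t ht
  rw [slope_def_field, hua, sub_zero]
  exact div_nonneg (hpos t ht).le (sub_pos.2 ht.1).le

end SturmLiouville

theorem tendsto_div_of_hasDerivAt_of_eq_zero {f g : ℝ → ℝ} {f' g' x : ℝ} (hf : HasDerivAt f f' x)
    (hg : HasDerivAt g g' x) (hfx : f x = 0) (hgx : g x = 0) (hg' : g' ≠ 0) :
    Tendsto (fun y => f y / g y) (𝓝[≠] x) (𝓝 (f' / g')) := by
  refine ((hasDerivAt_iff_tendsto_slope.mp hf).div (hasDerivAt_iff_tendsto_slope.mp hg)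
    hg').congr' ?_
  filter_upwards [self_mem_nhdsWithin] with y hy
  rw [Pi.div_apply, slope_def_field, slope_def_field, hfx, hgx, sub_zero, sub_zero,
    div_div_div_cancel_right₀ (sub_ne_zero.2 hy)]

theorem sq_mul_deriv_div {f g : ℝ → ℝ} {y : ℝ} (hf : DifferentiableAt ℝ f y)
    (hg : DifferentiableAt ℝ g y) (hfy : f y ≠ 0) :
    f y ^ 2 * deriv (fun z => g z / f z) y = f y * deriv g y - g y * deriv f y := by
  rw [deriv_fun_div hg hf hfy]
  field_simp

section Wronskian

variable {D c₁ c₂ u₁ u₂ : ℝ → ℝ} {a b : ℝ}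

theorem hasDerivAt_wronskian {t : ℝ} (hu₁ : DifferentiableAt ℝ u₁ t)
    (hu₂ : DifferentiableAt ℝ u₂ t)
    (h₁ : HasDerivAt (fun z => D z * deriv u₁ z) (c₁ t * u₁ t) t)
    (h₂ : HasDerivAt (fun z => D z * deriv u₂ z) (c₂ t * u₂ t) t) :
    HasDerivAt (fun z => u₁ z * (D z * deriv u₂ z) - u₂ z * (D z * deriv u₁ z))
      ((c₂ t - c₁ t) * u₁ t * u₂ t) t :=
  ((hu₁.hasDerivAt.mul h₂).sub (hu₂.hasDerivAt.mul h₁)).congr_deriv (by ring)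

theorem wronskian_eq_integral (hu₁ : Differentiable ℝ u₁) (hu₂ : Differentiable ℝ u₂)
    (hc₁ : ContinuousOn c₁ (Icc a b)) (hc₂ : ContinuousOn c₂ (Icc a b))
    (h₁ : ∀ t ∈ Icc a b, HasDerivAt (fun z => D z * deriv u₁ z) (c₁ t * u₁ t) t)
    (h₂ : ∀ t ∈ Icc a b, HasDerivAt (fun z => D z * deriv u₂ z) (c₂ t * u₂ t) t)
    (hu₁a : u₁ a = 0) (hu₂a : u₂ a = 0) {y : ℝ} (hy : y ∈ Icc a b) :
    u₁ y * (D y * deriv u₂ y) - u₂ y * (D y * deriv u₁ y)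
      = ∫ t in a..y, (c₂ t - c₁ t) * u₁ t * u₂ t := by
  have hsub : uIcc a y ⊆ Icc a b := by
    rw [uIcc_of_le hy.1]
    exact Icc_subset_Icc_right hy.2
  have hint : ContinuousOn (fun t => (c₂ t - c₁ t) * u₁ t * u₂ t) (Icc a b) :=
    ((hc₂.sub hc₁).mul hu₁.continuous.continuousOn).mul hu₂.continuous.continuousOn
  rw [intervalIntegral.integral_eq_sub_of_hasDerivAt
    (fun t ht => hasDerivAt_wronskian (hu₁ t) (hu₂ t) (h₁ t (hsub ht)) (h₂ t (hsub ht)))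
    ((hint.mono hsub).intervalIntegrable)]
  simp [hu₁a, hu₂a]

end Wronskian

namespace IsSol

variable {H L : ℝ} {k : ℤ} {D mu u : ℝ → ℝ}

/-- `IsSol` imposes the equation on `(0, H)` only; continuity of `(D u')'` extends it to the
endpoints, where the uniqueness argument needs it. -/
theorem hasDerivAt_flux (hu : IsSol H L k D mu u) (hH : 0 < H) (hD : ContDiff ℝ 1 D)
    (hmu : Continuous mu) :
    ∀ t ∈ Icc 0 H,
      HasDerivAt (fun z => D z * deriv u z) ((mu t + lamk L k ^ 2 * D t) * u t) t := by
  obtain ⟨hu2, -, -, hode⟩ := hu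
  have hg : ContDiff ℝ 1 (fun z => D z * deriv u z) := hD.mul (hu2.deriv' (n := 1))
  have heq : EqOn (deriv fun z => D z * deriv u z)
      (fun t => (mu t + lamk L k ^ 2 * D t) * u t) (Icc 0 H) :=
    EqOn.of_subset_closure (fun t ht => by linarith [hode t ht])
      (hg.continuous_deriv le_rfl).continuousOn
      ((hmu.add (continuous_const.mul hD.continuous)).mul hu2.continuous).continuousOn
      Ioo_subset_Icc_self (by rw [closure_Ioo hH.ne])
  exact fun t ht => (hg.differentiable one_ne_zero t).hasDerivAt.congr_deriv (heq ht)

theorem pos_and_deriv_pos (hu : IsSol H L k D mu u) (hH : 0 < H) (hD : ContDiff ℝ 1 D)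
    (hmu : Continuous mu) (hDpos : ∀ t ∈ Icc 0 H, 0 < D t) (hmupos : ∀ t ∈ Icc 0 H, 0 < mu t) :
    (∀ t ∈ Ioc 0 H, 0 < u t) ∧ 0 < deriv u 0 := by
  refine pos_and_deriv_pos_of_hasDerivAt_flux hH (hu.1.differentiable two_ne_zero)
    hD.continuous.continuousOn hDpos (hmu.add (continuous_const.mul hD.continuous)).continuousOn
    (fun t ht => ?_) (hu.hasDerivAt_flux hH hD hmu) hu.2.1 (hu.2.2.1 ▸ one_pos)
  exact add_pos_of_pos_of_nonneg (hmupos t (Ioo_subset_Icc_self ht))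
    (mul_nonneg (sq_nonneg _) (hDpos t (Ioo_subset_Icc_self ht)).le)

theorem mul_sq_mul_deriv_div_eq_integral {k₁ k₂ : ℤ} {u₁ u₂ : ℝ → ℝ}
    (hu₁ : IsSol H L k₁ D mu u₁) (hu₂ : IsSol H L k₂ D mu u₂) (hH : 0 < H)
    (hD : ContDiff ℝ 1 D) (hmu : Continuous mu) {y : ℝ} (hy : y ∈ Icc 0 H) (hy₀ : u₁ y ≠ 0) :
    D y * u₁ y ^ 2 * deriv (fun z => u₂ z / u₁ z) y
      = (lamk L k₂ ^ 2 - lamk L k₁ ^ 2) * ∫ s in (0 : ℝ)..y, D s * u₁ s * u₂ s := by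
  have hdiff₁ : Differentiable ℝ u₁ := hu₁.1.differentiable two_ne_zero
  have hdiff₂ : Differentiable ℝ u₂ := hu₂.1.differentiable two_ne_zero
  have hc (k : ℤ) : ContinuousOn (fun t => mu t + lamk L k ^ 2 * D t) (Icc 0 H) :=
    (hmu.add (continuous_const.mul hD.continuous)).continuousOn
  calc
    _ = u₁ y * (D y * deriv u₂ y) - u₂ y * (D y * deriv u₁ y) := by
      rw [mul_assoc, sq_mul_deriv_div (hdiff₁ y) (hdiff₂ y) hy₀]
      ring
    _ = ∫ s in (0 : ℝ)..y, ((mu s + lamk L k₂ ^ 2 * D s) - (mu s + lamk L k₁ ^ 2 * D s))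
          * u₁ s * u₂ s :=
      wronskian_eq_integral hdiff₁ hdiff₂ (hc k₁) (hc k₂) (hu₁.hasDerivAt_flux hH hD hmu)
        (hu₂.hasDerivAt_flux hH hD hmu) hu₁.2.1 hu₂.2.1 hy
    _ = _ := by
      rw [← intervalIntegral.integral_const_mul]
      congr 1 with s
      ring

end IsSol

theorem quotient_data_identities_general
    (H L D0 mu0 M : ℝ) (k1 k2 : ℤ)
    (hH : 0 < H) (hD0 : 0 < D0) (hmu0 : 0 < mu0)
    (D mu : ℝ → ℝ) (hOM : InOM H D0 mu0 M D mu)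
    (u1 u2 : ℝ → ℝ)
    (hu1 : IsSol H L k1 D mu u1) (hu2 : IsSol H L k2 D mu u2) :
    ContDiffOn ℝ 2 (fun y => u2 y / u1 y) (Set.Ioc 0 H)
    ∧ Filter.Tendsto (fun y => u2 y / u1 y) (nhdsWithin 0 (Set.Ioi 0))
        (nhds (deriv u2 0 / deriv u1 0))
    ∧ u2 H / u1 H = 1
    ∧ (∀ y ∈ Set.Ioc (0 : ℝ) H,
        D y * (u1 y) ^ 2 * deriv (fun z => u2 z / u1 z) y
          = ((lamk L k2) ^ 2 - (lamk L k1) ^ 2)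
            * ∫ s in (0 : ℝ)..y, D s * u1 s * u2 s)
    ∧ (∀ y ∈ Set.Ioo (0 : ℝ) H,
        -(deriv (fun z => D z * (u1 z) ^ 2
            * deriv (fun w => u2 w / u1 w) z) y)
          + ((lamk L k2) ^ 2 - (lamk L k1) ^ 2)
            * (D y * (u1 y) ^ 2 * (u2 y / u1 y)) = 0)
    ∧ Filter.Tendsto
        (fun y => D y * (u1 y) ^ 2 * deriv (fun z => u2 z / u1 z) y)
        (nhdsWithin 0 (Set.Ioi 0)) (nhds 0) := by
  obtain ⟨hD3, hmu3, hDgt, hmugt, -, -⟩ := hOM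
  have hD : ContDiff ℝ 1 D := hD3.of_le (by norm_num)
  have hDpos : ∀ t ∈ Icc 0 H, 0 < D t := fun t ht => hD0.trans (hDgt t ht)
  obtain ⟨hpos1, hderiv1⟩ :=
    hu1.pos_and_deriv_pos hH hD hmu3.continuous hDpos fun t ht => hmu0.trans (hmugt t ht)
  have hdiff1 : Differentiable ℝ u1 := hu1.1.differentiable two_ne_zero
  have hdiff2 : Differentiable ℝ u2 := hu2.1.differentiable two_ne_zero
  set F := fun y => (lamk L k2 ^ 2 - lamk L k1 ^ 2) * ∫ s in (0 : ℝ)..y, D s * u1 s * u2 s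
  have hF (y : ℝ) : HasDerivAt F ((lamk L k2 ^ 2 - lamk L k1 ^ 2) * (D y * u1 y * u2 y)) y :=
    (((hD.continuous.mul hdiff1.continuous).mul hdiff2.continuous).integral_hasStrictDerivAt
      0 y).hasDerivAt.const_mul _
  have hflux : ∀ y ∈ Ioc 0 H, D y * u1 y ^ 2 * deriv (fun z => u2 z / u1 z) y = F y :=
    fun y hy => hu1.mul_sq_mul_deriv_div_eq_integral hu2 hH hD hmu3.continuous
      (Ioc_subset_Icc_self hy) (hpos1 y hy).ne'
  refine ⟨hu2.1.contDiffOn.div hu1.1.contDiffOn fun y hy => (hpos1 y hy).ne',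
    (tendsto_div_of_hasDerivAt_of_eq_zero (hdiff2 0).hasDerivAt (hdiff1 0).hasDerivAt hu2.2.1
      hu1.2.1 hderiv1.ne').mono_left (nhdsGT_le_nhdsNE 0),
    by rw [hu1.2.2.1, hu2.2.2.1, div_one], hflux, fun y hy => ?_, ?_⟩
  · have hFeq : (fun z => D z * u1 z ^ 2 * deriv (fun w => u2 w / u1 w) z) =ᶠ[𝓝 y] F :=
      eventually_of_mem (Ioo_mem_nhds hy.1 hy.2) fun z hz => hflux z (Ioo_subset_Ioc_self hz)
    rw [((hF y).congr_of_eventuallyEq hFeq).deriv]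
    field_simp [(hpos1 y (Ioo_subset_Ioc_self hy)).ne']
    ring
  · have hF0 : Tendsto F (𝓝[>] 0) (𝓝 0) := by
      simpa [F] using (hF 0).continuousAt.tendsto.mono_left nhdsWithin_le_nhds
    exact hF0.congr' (eventually_of_mem (Ioc_mem_nhdsGT hH) fun y hy => (hflux y hy).symm)

theorem quotient_data_identities
    (H L D0 mu0 M : ℝ) (k1 k2 : ℤ)
    (hH : 0 < H) (hL : 0 < L) (hD0 : 0 < D0) (hmu0 : 0 < mu0)
    (hM : max D0 mu0 < M)
    (hk1 : 0 < k1) (hk12 : k1 < k2)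
    (D mu : ℝ → ℝ) (hOM : InOM H D0 mu0 M D mu)
    (u1 u2 : ℝ → ℝ)
    (hu1 : IsSol H L k1 D mu u1) (hu2 : IsSol H L k2 D mu u2)
    (hkap : 0 < kapm H L k1 D mu) :
    ContDiffOn ℝ 2 (fun y => u2 y / u1 y) (Set.Ioc 0 H)
    ∧ Filter.Tendsto (fun y => u2 y / u1 y) (nhdsWithin 0 (Set.Ioi 0))
        (nhds (deriv u2 0 / deriv u1 0))
    ∧ u2 H / u1 H = 1
    ∧ (∀ y ∈ Set.Ioc (0 : ℝ) H,
        D y * (u1 y) ^ 2 * deriv (fun z => u2 z / u1 z) y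
          = ((lamk L k2) ^ 2 - (lamk L k1) ^ 2)
            * ∫ s in (0 : ℝ)..y, D s * u1 s * u2 s)
    ∧ (∀ y ∈ Set.Ioo (0 : ℝ) H,
        -(deriv (fun z => D z * (u1 z) ^ 2
            * deriv (fun w => u2 w / u1 w) z) y)
          + ((lamk L k2) ^ 2 - (lamk L k1) ^ 2)
            * (D y * (u1 y) ^ 2 * (u2 y / u1 y)) = 0)
    ∧ Filter.Tendsto
        (fun y => D y * (u1 y) ^ 2 * deriv (fun z => u2 z / u1 z) y)
        (nhdsWithin 0 (Set.Ioi 0)) (nhds 0) :=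
  quotient_data_identities_general H L D0 mu0 M k1 k2 hH hD0 hmu0 D mu hOM u1 u2 hu1 hu2
end
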